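/- arXiv:1504.03218 — 3 statements merged into one kernel-verified Lean document; each statement's English description precedes it below -/
import Mathlib

section
/- If every d_j > 0, then there exists a feasible assignment x for the SIA reduction instance with cost exactly |J| if and only if there exists a subset A ⊆ J with ∑_{j∈A} d_j = S/2. -/
theorem stmt_5 {J : Type*} [Fintype J] [DecidableEq J] (d : J → ℕ)
    (hpos : ∀ j, 0 < d j) (hS : Even (∑ j, d j)) :
    (∃ x : Fin 2 → J → ℕ,
        (∀ j, x 0 j + x 1 j = d j) ∧
        (∀ i, ∑ j, x i j ≤ (∑ j, d j) / 2) ∧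
        (Finset.univ.filter fun p : Fin 2 × J => 0 < x p.1 p.2).card = Fintype.card J)
      ↔ ∃ A : Finset J, ∑ j ∈ A, d j = (∑ j, d j) / 2 := by
  obtain ⟨k, hk⟩ := hS
  have hhalf : (∑ j, d j) / 2 = k := by omega
  constructor
  · rintro ⟨x, hsum, hle, hcard⟩
    have hc : ∀ j, (1:ℕ) ≤ (if 0 < x 0 j then 1 else 0) + (if 0 < x 1 j then 1 else 0) := by
      intro j
      have h1 := hpos j
      have h2 := hsum j
      by_cases h0 : 0 < x 0 j <;> by_cases h1' : 0 < x 1 j <;> simp [h0, h1'] <;> omega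
    have hcard' : ∑ j : J, ((if 0 < x 0 j then (1:ℕ) else 0) + (if 0 < x 1 j then 1 else 0))
        = ∑ _j : J, 1 := by
      rw [Finset.sum_add_distrib]
      have h3 : (Finset.univ.filter fun p : Fin 2 × J => 0 < x p.1 p.2).card
          = ∑ j : J, (if 0 < x 0 j then (1:ℕ) else 0) + ∑ j : J, (if 0 < x 1 j then 1 else 0) := by
        rw [Finset.card_filter, Fintype.sum_prod_type, Fin.sum_univ_two]
      rw [← h3, hcard]
      simp
    have heach : ∀ j ∈ Finset.univ,
        (1:ℕ) = (if 0 < x 0 j then 1 else 0) + (if 0 < x 1 j then 1 else 0) := by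
      rw [← Finset.sum_eq_sum_iff_of_le (fun j _ => hc j)]
      simpa using hcard'.symm
    refine ⟨Finset.univ.filter (fun j => 0 < x 0 j), ?_⟩
    have hkey : ∀ j ∈ Finset.univ.filter (fun j => 0 < x 0 j), d j = x 0 j := by
      intro j hj
      simp only [Finset.mem_filter] at hj
      have h := heach j (Finset.mem_univ j)
      have h2 := hsum j
      by_cases h1' : 0 < x 1 j
      · simp [hj.2, h1'] at h
      · omega
    rw [Finset.sum_congr rfl hkey, hhalf]
    have h0 : ∑ j ∈ Finset.univ.filter (fun j => 0 < x 0 j), x 0 j = ∑ j, x 0 j := by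
      apply Finset.sum_filter_of_ne
      intro j _ hne
      omega
    rw [h0]
    have hs0 := hle 0
    have hs1 := hle 1
    rw [hhalf] at hs0 hs1
    have htot : ∑ j, x 0 j + ∑ j, x 1 j = ∑ j, d j := by
      rw [← Finset.sum_add_distrib]
      exact Finset.sum_congr rfl fun j _ => hsum j
    omega
  · rintro ⟨A, hA⟩
    rw [hhalf] at hA
    refine ⟨fun i j => if i = 0 then (if j ∈ A then d j else 0) else (if j ∈ A then 0 else d j),
      ?_, ?_, ?_⟩
    · intro j
      by_cases hj : j ∈ A <;> simp [hj]
    · have hsA : ∑ j : J, (if j ∈ A then d j else 0) = k := by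
        rw [Finset.sum_ite_mem, Finset.univ_inter, hA]
      have hsB : ∑ j : J, (if j ∈ A then 0 else d j) = k := by
        have h4 : ∑ j : J, ((if j ∈ A then d j else 0) + (if j ∈ A then 0 else d j)) = ∑ j, d j := by
          refine Finset.sum_congr rfl fun j _ => ?_
          by_cases hj : j ∈ A <;> simp [hj]
        rw [Finset.sum_add_distrib, hsA] at h4
        omega
      intro i
      fin_cases i <;> simp [hhalf, hsA, hsB]
    · rw [Finset.card_filter, Fintype.sum_prod_type, Fin.sum_univ_two, ← Finset.sum_add_distrib]
      have h5 : ∀ j ∈ Finset.univ,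
          ((if (0:ℕ) < (if (0:Fin 2) = 0 then (if j ∈ A then d j else 0)
              else (if j ∈ A then 0 else d j)) then (1:ℕ) else 0)
          + (if (0:ℕ) < (if (1:Fin 2) = 0 then (if j ∈ A then d j else 0)
              else (if j ∈ A then 0 else d j)) then (1:ℕ) else 0)) = 1 := by
        intro j _
        have := hpos j
        by_cases hj : j ∈ A <;> simp [hj] <;> omega
      rw [Finset.sum_congr rfl h5]
      simp [Finset.card_univ]
end

section
/- If a feasible assignment x for the SIA reduction instance has cost |J| (with all d_j > 0), then no service is split, i.e. for each j exactly one of x(0,j), x(1,j) is positive, and the set A = {j : x(0,j) > 0} satisfies ∑_{j∈A} d_j = S/2. -/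
theorem stmt_6 {J : Type*} [Fintype J] [DecidableEq J] (d : J → ℕ)
    (hpos : ∀ j, 0 < d j) (hS : Even (∑ j, d j))
    (x : Fin 2 → J → ℕ)
    (hdem : ∀ j, x 0 j + x 1 j = d j)
    (hcap : ∀ i, ∑ j, x i j ≤ (∑ j, d j) / 2)
    (hcost : (Finset.univ.filter fun p : Fin 2 × J => 0 < x p.1 p.2).card
      = Fintype.card J) :
    (∀ j, Xor' (0 < x 0 j) (0 < x 1 j)) ∧
      ∑ j ∈ Finset.univ.filter (fun j => 0 < x 0 j), d j = (∑ j, d j) / 2 := by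
  classical
  have hcard : (Finset.univ.filter fun p : Fin 2 × J => 0 < x p.1 p.2).card
      = ∑ j, ((if 0 < x 0 j then 1 else 0) + (if 0 < x 1 j then 1 else 0)) := by
    rw [Finset.card_filter, Fintype.sum_prod_type, Fin.sum_univ_two,
      Finset.sum_add_distrib]
  have hle : ∀ j ∈ (Finset.univ : Finset J),
      1 ≤ (if 0 < x 0 j then 1 else 0) + (if 0 < x 1 j then 1 else 0) := by
    intro j _
    have h1 := hpos j
    have h2 := hdem j
    split_ifs <;> omega
  have hsum : ∑ j : J, (1 : ℕ)
      = ∑ j, ((if 0 < x 0 j then 1 else 0) + (if 0 < x 1 j then 1 else 0)) := by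
    rw [← hcard, hcost, Fintype.card, Finset.card_eq_sum_ones]
  have heach : ∀ j,
      (if 0 < x 0 j then 1 else 0) + (if 0 < x 1 j then 1 else 0) = 1 := by
    intro j
    have := (Finset.sum_eq_sum_iff_of_le hle).mp hsum j (Finset.mem_univ j)
    omega
  have hkey : ∀ j, (0 < x 0 j ∧ x 1 j = 0) ∨ (0 < x 1 j ∧ x 0 j = 0) := by
    intro j
    have h := heach j
    have hd := hdem j
    have hp := hpos j
    split_ifs at h <;> omega
  have hxor : ∀ j, Xor' (0 < x 0 j) (0 < x 1 j) := by
    intro j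
    rcases hkey j with ⟨a, b⟩ | ⟨a, b⟩
    · exact Or.inl ⟨a, by omega⟩
    · exact Or.inr ⟨a, by omega⟩
  refine ⟨hxor, ?_⟩
  set A := Finset.univ.filter (fun j => 0 < x 0 j) with hA
  have hAsum : ∑ j ∈ A, d j = ∑ j, x 0 j := by
    rw [hA, Finset.sum_filter]
    refine Finset.sum_congr rfl fun j _ => ?_
    have hd := hdem j
    rcases hkey j with ⟨a, b⟩ | ⟨a, b⟩ <;> split_ifs <;> omega
  have hBsum : ∑ j ∈ Finset.univ \ A, d j = ∑ j, x 1 j := by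
    rw [hA, ← Finset.filter_not, Finset.sum_filter]
    refine Finset.sum_congr rfl fun j _ => ?_
    have hd := hdem j
    rcases hkey j with ⟨a, b⟩ | ⟨a, b⟩ <;> split_ifs <;> omega
  have htot : ∑ j ∈ Finset.univ \ A, d j + ∑ j ∈ A, d j = ∑ j, d j :=
    Finset.sum_sdiff (Finset.subset_univ A)
  have hc0 := hcap 0
  have hc1 := hcap 1
  obtain ⟨k, hk⟩ := hS
  omega
end

section
/- Conversely, given a subset A ⊆ J with ∑_{j∈A} d_j = S/2, the assignment x defined by x(0,j) = d_j if j ∈ A else 0, and x(1,j) = d_j if j ∉ A else 0, is feasible for the SIA reduction instance and has cost exactly |{j : d_j > 0}|. -/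
theorem stmt_7 {J : Type*} [Fintype J] [DecidableEq J] (d : J → ℕ)
    (hS : Even (∑ j, d j))
    (A : Finset J) (hA : ∑ j ∈ A, d j = (∑ j, d j) / 2)
    (x : Fin 2 → J → ℕ)
    (hx : ∀ j, (x 0 j = if j ∈ A then d j else 0) ∧
               (x 1 j = if j ∉ A then d j else 0)) :
    (∀ j, x 0 j + x 1 j = d j) ∧
    (∀ i, ∑ j, x i j ≤ (∑ j, d j) / 2) ∧
    (Finset.univ.filter fun p : Fin 2 × J => 0 < x p.1 p.2).card =
      (Finset.univ.filter fun j => 0 < d j).card := by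
  have hsum0 : ∑ j, x 0 j = ∑ j ∈ A, d j := by
    rw [← Finset.sum_filter_add_sum_filter_not Finset.univ (· ∈ A)]
    have h1 : ∑ j ∈ Finset.univ.filter (· ∈ A), x 0 j = ∑ j ∈ Finset.univ.filter (· ∈ A), d j := by
      apply Finset.sum_congr rfl
      intro j hj
      simp only [Finset.mem_filter] at hj
      rw [(hx j).1, if_pos hj.2]
    have h2 : ∑ j ∈ Finset.univ.filter (¬ · ∈ A), x 0 j = 0 := by
      apply Finset.sum_eq_zero
      intro j hj
      simp only [Finset.mem_filter] at hj
      rw [(hx j).1, if_neg hj.2]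
    rw [h1, h2, add_zero]
    congr 1
    ext j; simp
  have hsum1 : ∑ j, x 1 j = (∑ j, d j) - ∑ j ∈ A, d j := by
    have : ∑ j, (x 0 j + x 1 j) = ∑ j, d j := by
      apply Finset.sum_congr rfl
      intro j _
      rcases hx j with ⟨h0, h1⟩
      by_cases h : j ∈ A <;> simp [h0, h1, h]
    rw [Finset.sum_add_distrib, hsum0] at this
    omega
  refine ⟨?_, ?_, ?_⟩
  · intro j
    rcases hx j with ⟨h0, h1⟩
    by_cases h : j ∈ A <;> simp [h0, h1, h]
  · intro i
    obtain ⟨k, hk⟩ := hS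
    have hi : i = 0 ∨ i = 1 := by omega
    rcases hi with h | h <;> subst h
    · rw [hsum0, hA]
    · rw [hsum1, hA]; omega
  · apply Finset.card_bij' (fun p _ => p.2)
      (fun j _ => (if j ∈ A then (0 : Fin 2) else 1, j))
    · intro p hp
      simp only [Finset.mem_filter, Finset.mem_univ, true_and] at hp ⊢
      rcases hx p.2 with ⟨h0, h1⟩
      have hi : p.1 = 0 ∨ p.1 = 1 := by omega
      rcases hi with h | h <;> rw [h] at hp
      · rw [h0] at hp; by_cases hj : p.2 ∈ A <;> simp [hj] at hp <;> exact hp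
      · rw [h1] at hp; by_cases hj : p.2 ∈ A <;> simp [hj] at hp; exact hp
    · intro j hj
      simp only [Finset.mem_filter, Finset.mem_univ, true_and] at hj ⊢
      rcases hx j with ⟨h0, h1⟩
      by_cases h : j ∈ A <;> simp [h, h0, h1, hj]
    · intro p hp
      simp only [Finset.mem_filter, Finset.mem_univ, true_and] at hp
      rcases hx p.2 with ⟨h0, h1⟩
      have hi : p.1 = 0 ∨ p.1 = 1 := by omega
      rcases hi with h | h <;> rw [h] at hp
      · rw [h0] at hp
        by_cases hj : p.2 ∈ A
        · simp [hj]; ext <;> simp [h, hj]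
        · simp [hj] at hp
      · rw [h1] at hp
        by_cases hj : p.2 ∈ A
        · simp [hj] at hp
        · simp [hj]; ext <;> simp [h, hj]
    · intro j hj
      rfl
end
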